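/- Let T be a standard k-shape tableau and suppose the letter n+1 occupies ℓ+1 cells forming a cover c_{n+1}. Let cocharge'(n+1) be the cocharge of letter n+1 computed as if (n+1)↓ were located at the position of (n+1)↑. Then cocharge'(n+1) − cocharge(n+1) = ℓ = |c_{n+1}| − 1. -/

import Mathlib

open Classical

structure YPartition where
  parts : ℕ → ℕ
  antitone' : ∀ i j : ℕ, i ≤ j → parts j ≤ parts i
  finite' : ∃ N : ℕ, ∀ i : ℕ, N ≤ i → parts i = 0

namespace YPartition

def empty : YPartition :=
  ⟨fun _ => 0, fun _ _ _ => le_rfl, ⟨0, fun _ _ => rfl⟩⟩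

def Mem (lam : YPartition) (b : ℕ × ℕ) : Prop := b.2 < lam.parts b.1

def Le (lam mu : YPartition) : Prop := ∀ i : ℕ, lam.parts i ≤ mu.parts i

noncomputable def conj (lam : YPartition) (j : ℕ) : ℕ :=
  @Nat.find (fun i => lam.parts i ≤ j) (Classical.decPred _)
    (by
      obtain ⟨N, hN⟩ := lam.finite'
      exact ⟨N, show lam.parts N ≤ j by rw [hN N le_rfl]; exact Nat.zero_le j⟩)

noncomputable def hook (lam : YPartition) (i j : ℕ) : ℕ :=
  (lam.parts i - j) + (lam.conj j - i) - 1

noncomputable def rsk (k : ℕ) (lam : YPartition) (i : ℕ) : ℕ :=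
  Nat.card {j : ℕ | lam.Mem (i, j) ∧ lam.hook i j ≤ k}

noncomputable def csk (k : ℕ) (lam : YPartition) (j : ℕ) : ℕ :=
  Nat.card {i : ℕ | lam.Mem (i, j) ∧ lam.hook i j ≤ k}

def IsKShape (k : ℕ) (lam : YPartition) : Prop :=
  (∀ i i' : ℕ, i ≤ i' → rsk k lam i' ≤ rsk k lam i) ∧
  (∀ j j' : ℕ, j ≤ j' → csk k lam j' ≤ csk k lam j)

def IsCore (p : ℕ) (lam : YPartition) : Prop :=
  ∀ i j : ℕ, lam.Mem (i, j) → lam.hook i j ≠ p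

noncomputable def psize (lam : YPartition) : ℕ := Nat.card {b : ℕ × ℕ | lam.Mem b}

noncomputable def intSize (k : ℕ) (lam : YPartition) : ℕ :=
  Nat.card {b : ℕ × ℕ | lam.Mem b ∧ k < lam.hook b.1 b.2}

noncomputable def bdrySize (k : ℕ) (lam : YPartition) : ℕ :=
  Nat.card {b : ℕ × ℕ | lam.Mem b ∧ lam.hook b.1 b.2 ≤ k}

noncomputable def union (lam mu : YPartition) : YPartition :=
  ⟨fun i => max (lam.parts i) (mu.parts i),
   fun i j h => max_le_max (lam.antitone' i j h) (mu.antitone' i j h),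
   by
     obtain ⟨N, hN⟩ := lam.finite'
     obtain ⟨M, hM⟩ := mu.finite'
     refine ⟨max N M, fun i hi => ?_⟩
     show max (lam.parts i) (mu.parts i) = 0
     rw [hN i (le_trans (le_max_left _ _) hi), hM i (le_trans (le_max_right _ _) hi)]
     simp⟩

end YPartition

open YPartition

def diagIdx (b : ℕ × ℕ) : ℤ := (b.2 : ℤ) - (b.1 : ℤ)

def cellDist (b b' : ℕ × ℕ) : ℕ := (diagIdx b - diagIdx b').natAbs

def Contiguous (k : ℕ) (b b' : ℕ × ℕ) : Prop :=
  cellDist b b' = k ∨ cellDist b b' = k + 1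

def HasAddable (lam : YPartition) (i : ℕ) : Prop :=
  i = 0 ∨ lam.parts i < lam.parts (i - 1)

def addCorner (lam : YPartition) (i : ℕ) : ℕ × ℕ := (i, lam.parts i)

def IsAddableCell (lam : YPartition) (b : ℕ × ℕ) : Prop :=
  HasAddable lam b.1 ∧ b.2 = lam.parts b.1

def HasRemovable (lam : YPartition) (i : ℕ) : Prop := lam.parts (i + 1) < lam.parts i

def remCorner (lam : YPartition) (i : ℕ) : ℕ × ℕ := (i, lam.parts i - 1)

def KConnectedBelow (k : ℕ) (lam : YPartition) (r r' : ℕ) : Prop :=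
  r' < r ∧ HasAddable lam r ∧ HasAddable lam r' ∧
    cellDist (addCorner lam r) (addCorner lam r') ≤ k + 1 ∧
    ∀ r'' : ℕ, r'' < r' → HasAddable lam r'' →
      ¬ cellDist (addCorner lam r) (addCorner lam r'') ≤ k + 1

def ContigConnected (k : ℕ) (lam : YPartition) (r r' : ℕ) : Prop :=
  KConnectedBelow k lam r r' ∧ Contiguous k (addCorner lam r) (addCorner lam r')

inductive InChain (k : ℕ) (lam : YPartition) (r : ℕ) : ℕ → Prop
  | refl : InChain k lam r r
  | step {s s' : ℕ} : InChain k lam r s → KConnectedBelow k lam s s' → InChain k lam r s'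

noncomputable def iCC (k : ℕ) (lam : YPartition) (top bot : ℕ) (ct cb : Bool) : ℕ :=
  Nat.card {s : ℕ | InChain k lam top s ∧ (if cb then bot ≤ s else bot < s) ∧
    (ct = true ∨ s ≠ top)}

noncomputable def rowUp (lam mu : YPartition) : ℕ := sSup {i : ℕ | lam.parts i < mu.parts i}

noncomputable def rowDown (lam mu : YPartition) : ℕ := sInf {i : ℕ | lam.parts i < mu.parts i}

noncomputable def chargeStepVal (k : ℕ) (sh : YPartition) (r r' : ℕ) : ℤ :=
  if r' ≤ r then (iCC k sh r r' true false : ℤ) else -(iCC k sh r' r false true : ℤ)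

noncomputable def cochargeStepVal (k : ℕ) (sh : YPartition) (r r' : ℕ) : ℤ :=
  if r' < r then -(iCC k sh r r' false false : ℤ) else (iCC k sh r' r true true : ℤ)

noncomputable def chargeLet (k : ℕ) (T : ℕ → YPartition) : ℕ → ℤ
  | 0 => 0
  | 1 => 0
  | n + 2 =>
    chargeLet k T (n + 1) +
      chargeStepVal k (T (n + 1)) (rowUp (T n) (T (n + 1)) + 1)
        (rowUp (T (n + 1)) (T (n + 2)))

noncomputable def cochargeLet (k : ℕ) (T : ℕ → YPartition) : ℕ → ℤ
  | 0 => 0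
  | 1 => 0
  | n + 2 =>
    cochargeLet k T (n + 1) +
      cochargeStepVal k (T (n + 1)) (rowDown (T n) (T (n + 1)) + 1)
        (rowDown (T (n + 1)) (T (n + 2)))

noncomputable def chargeTab (k : ℕ) (T : ℕ → YPartition) (N : ℕ) : ℤ :=
  ∑ n ∈ Finset.range N, chargeLet k T (n + 1)

noncomputable def cochargeTab (k : ℕ) (T : ℕ → YPartition) (N : ℕ) : ℤ :=
  ∑ n ∈ Finset.range N, cochargeLet k T (n + 1)

def skewSet (lam mu : YPartition) : Set (ℕ × ℕ) := {b | mu.Mem b ∧ ¬ lam.Mem b}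

def IsStringOf (k : ℕ) (lam mu : YPartition) (ℓ : ℕ) (a : ℕ → ℕ × ℕ) : Prop :=
  YPartition.Le lam mu ∧
  (∀ b : ℕ × ℕ, b ∈ skewSet lam mu ↔ ∃ i < ℓ, a i = b) ∧
  (∀ i j : ℕ, i < ℓ → j < ℓ → a i = a j → i = j) ∧
  (∀ i : ℕ, i + 1 < ℓ → (a (i + 1)).1 < (a i).1 ∧ Contiguous k (a i) (a (i + 1)))

def IsRowTypeStringOf (k : ℕ) (lam mu : YPartition) (ℓ : ℕ) (a : ℕ → ℕ × ℕ) : Prop :=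
  IsStringOf k lam mu ℓ a ∧ ∀ i : ℕ, rsk k mu i = rsk k lam i

def IsColTypeStringOf (k : ℕ) (lam mu : YPartition) (ℓ : ℕ) (a : ℕ → ℕ × ℕ) : Prop :=
  IsStringOf k lam mu ℓ a ∧ ∀ j : ℕ, csk k mu j = csk k lam j

def TranslateBy (v : ℤ × ℤ) (b b' : ℕ × ℕ) : Prop :=
  (b'.1 : ℤ) = (b.1 : ℤ) + v.1 ∧ (b'.2 : ℤ) = (b.2 : ℤ) + v.2

def IsRowMove (k ℓ r : ℕ) (lam mu : YPartition) : Prop :=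
  1 ≤ r ∧ 1 ≤ ℓ ∧ IsKShape k lam ∧ IsKShape k mu ∧
  ∃ (c : ℕ → YPartition) (a : ℕ → ℕ → ℕ × ℕ),
    c 0 = lam ∧ c r = mu ∧
    (∀ i < r, IsRowTypeStringOf k (c i) (c (i + 1)) ℓ (a i)) ∧
    (∀ i < r, ∃ v : ℤ × ℤ, ∀ t < ℓ, TranslateBy v (a 0 t) (a i t)) ∧
    (∀ i : ℕ, i + 1 < r → (a (i + 1) 0).2 = (a i 0).2 + 1)

def IsColMove (k ℓ r : ℕ) (lam mu : YPartition) : Prop :=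
  1 ≤ r ∧ 1 ≤ ℓ ∧ IsKShape k lam ∧ IsKShape k mu ∧
  ∃ (c : ℕ → YPartition) (a : ℕ → ℕ → ℕ × ℕ),
    c 0 = lam ∧ c r = mu ∧
    (∀ i < r, IsColTypeStringOf k (c i) (c (i + 1)) ℓ (a i)) ∧
    (∀ i < r, ∃ v : ℤ × ℤ, ∀ t < ℓ, TranslateBy v (a 0 t) (a i t)) ∧
    (∀ i : ℕ, i + 1 < r → (a (i + 1) (ℓ - 1)).1 = (a i (ℓ - 1)).1 + 1)

def IsMoveOf (k ℓ r : ℕ) (isRow : Bool) (lam mu : YPartition) : Prop :=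
  if isRow then IsRowMove k ℓ r lam mu else IsColMove k ℓ r lam mu

def MoveRel (k : ℕ) (lam mu : YPartition) : Prop :=
  ∃ ℓ r : ℕ, IsRowMove k ℓ r lam mu ∨ IsColMove k ℓ r lam mu

def IsCover (k : ℕ) (lam mu : YPartition) : Prop :=
  IsKShape k lam ∧ IsKShape k mu ∧
  ∃ (ℓ : ℕ) (a : ℕ → ℕ × ℕ), 1 ≤ ℓ ∧ IsStringOf k lam mu ℓ a ∧
    (∃ i : ℕ, rsk k lam i < rsk k mu i) ∧ (∃ j : ℕ, csk k lam j < csk k mu j)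

noncomputable def topCellC (lam mu : YPartition) : ℕ × ℕ :=
  (rowUp lam mu, lam.parts (rowUp lam mu))

noncomputable def botCellC (lam mu : YPartition) : ℕ × ℕ :=
  (rowDown lam mu, lam.parts (rowDown lam mu))

def CanContinueBelow (k : ℕ) (lam mu : YPartition) : Prop :=
  ∃ i : ℕ, HasAddable lam i ∧ i < rowDown lam mu ∧
    Contiguous k (botCellC lam mu) (addCorner lam i)

def CanContinueAbove (k : ℕ) (lam mu : YPartition) : Prop :=
  ∃ i : ℕ, HasAddable lam i ∧ rowUp lam mu < i ∧
    Contiguous k (addCorner lam i) (topCellC lam mu)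

def RevContinueBelow (k : ℕ) (lam mu : YPartition) : Prop :=
  ∃ i : ℕ, HasRemovable mu i ∧ i < rowDown lam mu ∧
    Contiguous k (botCellC lam mu) (remCorner mu i)

def RevContinueAbove (k : ℕ) (lam mu : YPartition) : Prop :=
  ∃ i : ℕ, HasRemovable mu i ∧ rowUp lam mu < i ∧
    Contiguous k (remCorner mu i) (topCellC lam mu)

def IsMaximalCover (k : ℕ) (lam mu : YPartition) : Prop :=
  IsCover k lam mu ∧ ¬ CanContinueAbove k lam mu ∧ ¬ CanContinueBelow k lam mu

def IsReverseMaximalCover (k : ℕ) (lam mu : YPartition) : Prop :=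
  IsCover k lam mu ∧ ¬ RevContinueAbove k lam mu ∧ ¬ RevContinueBelow k lam mu

def StdKShapeTableau (k N : ℕ) (T : ℕ → YPartition) : Prop :=
  T 0 = YPartition.empty ∧ ∀ n < N, IsCover k (T n) (T (n + 1))

def HorizStrip (lam mu : YPartition) : Prop :=
  YPartition.Le lam mu ∧ ∀ j : ℕ, mu.conj j ≤ lam.conj j + 1

def VertStrip (lam mu : YPartition) : Prop :=
  YPartition.Le lam mu ∧ ∀ i : ℕ, mu.parts i ≤ lam.parts i + 1

def IsStdKTableau (k N : ℕ) (T : ℕ → YPartition) : Prop :=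
  T 0 = YPartition.empty ∧ (∀ n ≤ N, IsCore (k + 1) (T n)) ∧
  ∀ n < N, HorizStrip (T n) (T (n + 1)) ∧ VertStrip (T n) (T (n + 1)) ∧
    bdrySize k (T (n + 1)) = bdrySize k (T n) + 1

def cellResidue (k : ℕ) (b : ℕ × ℕ) : ZMod (k + 1) :=
  (b.2 : ZMod (k + 1)) - (b.1 : ZMod (k + 1))

def GroundPos (lam : YPartition) (i j : ℕ) : Prop :=
  1 ≤ i ∧ lam.parts i ≤ j ∧ j < lam.parts (i - 1)

noncomputable def diagCount (k : ℕ) (e : ZMod (k + 1)) (b b' : ℕ × ℕ) : ℕ :=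
  Nat.card {d : ℤ | min (diagIdx b) (diagIdx b') < d ∧
    d < max (diagIdx b) (diagIdx b') ∧ (d : ZMod (k + 1)) = e}

noncomputable def upCell (lam mu : YPartition) : ℕ × ℕ :=
  (rowUp lam mu, lam.parts (rowUp lam mu))

def shiftU (S : Set (ℕ × ℕ)) : Set (ℕ × ℕ) := (fun b => (b.1 + 1, b.2)) '' S

/-!
Let `bot = rowDown` and `top = rowUp` be the lowest and highest of the rows that grow in
`T n ⋖ T (n + 1)`, and `r` the row above the lowermost `n`, which is addable in `T n`.
Consecutive grown rows are `k`-connected, so the chain from `top` runs through all grown rows and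
then continues as the chain from `bot`. A chain started at an addable row `s > bot` meets the band
`(bot, top]` below `s` as often as the grown rows do: between a row and its `k`-connected successor
there is exactly one grown row of the band when the successor lies in the band, and none
otherwise. Both cocharge steps are chain counts, and in each of the cases `r ≤ bot`,
`bot < r ≤ top`, `top < r` their difference is therefore the number of grown rows above `bot`,
that is `|c_{n+1}| - 1`.
-/

lemma Set.ncard_inter_union_of_disjoint {α : Type*} {A B C : Set α} (hA : A.Finite)
    (hBC : Disjoint B C) : (A ∩ (B ∪ C)).ncard = (A ∩ B).ncard + (A ∩ C).ncard := by
  rw [Set.inter_union_distrib_left, Set.ncard_union_eq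
    (hBC.mono Set.inter_subset_right Set.inter_subset_right)
    (hA.subset Set.inter_subset_left) (hA.subset Set.inter_subset_left)]

lemma Set.ncard_inter_Ioo_eq_add {A : Set ℕ} (hA : A.Finite) {a b c : ℕ} (hcb : c ≤ b) :
    (A ∩ Set.Ioo a b).ncard =
      (A ∩ Set.Ioo a b ∩ Set.Ici c).ncard + (A ∩ Set.Ioo a c).ncard := by
  rw [← Set.ncard_inter_add_ncard_sdiff_eq_ncard _ (Set.Ici c) (hA.subset Set.inter_subset_left)]
  congr 2
  ext x
  simp only [Set.mem_sdiff, Set.mem_inter_iff, Set.mem_Ioo, Set.mem_Ici, not_le]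
  constructor
  · rintro ⟨⟨hx, hax, -⟩, hxc⟩
    exact ⟨hx, hax, hxc⟩
  · rintro ⟨hx, hax, hxc⟩
    exact ⟨⟨hx, hax, by omega⟩, hxc⟩

namespace YPartition

variable {k : ℕ} {lam : YPartition} {i j s : ℕ}

lemma lt_conj_iff : i < lam.conj j ↔ j < lam.parts i := by
  unfold conj
  rw [@Nat.lt_find_iff _ (Classical.decPred _)]
  refine ⟨fun h => not_le.mp (h i le_rfl), fun h m hm => not_le.mpr ?_⟩
  exact lt_of_lt_of_le h (lam.antitone' m i hm)

lemma conj_eq_of_parts_le_of_lt (hs : 0 < s) (h₁ : lam.parts s ≤ j)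
    (h₂ : j < lam.parts (s - 1)) : lam.conj j = s := by
  have hle : ¬ s < lam.conj j := by rw [lt_conj_iff]; omega
  have hlt : s - 1 < lam.conj j := lt_conj_iff.mpr h₂
  omega

lemma finite_setOf_mem (lam : YPartition) : {b : ℕ × ℕ | lam.Mem b}.Finite := by
  obtain ⟨N, hN⟩ := lam.finite'
  refine ((Set.finite_Iio N).prod (Set.finite_Iio (lam.parts 0))).subset ?_
  rintro ⟨i, j⟩ (hb : j < lam.parts i)
  have h0 := lam.antitone' 0 i (Nat.zero_le i)
  have hiN : i < N := by
    by_contra hc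
    rw [hN i (by omega)] at hb
    omega
  exact ⟨hiN, show j < lam.parts 0 by omega⟩

lemma rsk_eq_zero_of_parts_add_eq (h : lam.parts (i + k) = lam.parts i) :
    rsk k lam i = 0 := by
  rw [rsk, Nat.card_eq_zero]
  refine Or.inl ⟨fun ⟨j, (hj : j < lam.parts i), hhook⟩ => ?_⟩
  have hconj : i + k < lam.conj j := lt_conj_iff.mpr (h ▸ hj)
  have : lam.hook i j = (lam.parts i - j) + (lam.conj j - i) - 1 := rfl
  omega

lemma rsk_pos (hk : 1 ≤ k) (hi : 0 < lam.parts i)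
    (hconj : lam.conj (lam.parts i - 1) = i + 1) : 0 < rsk k lam i := by
  rw [rsk, Nat.card_coe_set_eq, Set.ncard_pos
    ((Set.finite_Iio (lam.parts i)).subset fun j hj => hj.1)]
  refine ⟨lam.parts i - 1, show lam.parts i - 1 < lam.parts i by omega, ?_⟩
  show (lam.parts i - (lam.parts i - 1)) + (lam.conj (lam.parts i - 1) - i) - 1 ≤ k
  omega

lemma le_csk (hconj : lam.conj j = s) (hrows : ∀ i' ∈ Set.Ico i s, lam.parts i' = j + 1)
    (hk : s - i ≤ k) : s - i ≤ csk k lam j := by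
  rw [csk, Nat.card_coe_set_eq, ← Nat.card_Ico, ← Set.ncard_coe_finset, Finset.coe_Ico]
  refine Set.ncard_le_ncard (fun i' hi' => ⟨?_, ?_⟩)
    ((Set.finite_Iio (lam.conj j)).subset fun i' hi' => lt_conj_iff.mpr hi'.1)
  · show j < lam.parts i'
    rw [hrows i' hi']
    omega
  · show (lam.parts i' - j) + (lam.conj j - i') - 1 ≤ k
    rw [hrows i' hi', hconj]
    have := hi'.1
    omega

lemma csk_le (hconj : lam.conj j = s) {g : ℕ} (hg : ∀ i' < s, j + g ≤ lam.parts i') :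
    csk k lam j ≤ k + 1 - g := by
  have hsub : {i' | lam.Mem (i', j) ∧ lam.hook i' j ≤ k} ⊆ Set.Ico (s - (k + 1 - g)) s := by
    rintro i' ⟨(hmem : j < lam.parts i'), hhook⟩
    have hi's : i' < s := hconj ▸ lt_conj_iff.mpr hmem
    have hpart := hg i' hi's
    have : lam.hook i' j = (lam.parts i' - j) + (lam.conj j - i') - 1 := rfl
    exact ⟨by omega, hi's⟩
  rw [csk, Nat.card_coe_set_eq]
  calc _ ≤ (Set.Ico (s - (k + 1 - g)) s).ncard :=
        Set.ncard_le_ncard hsub (Set.finite_Ico _ _)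
    _ ≤ k + 1 - g := by
      rw [← Finset.coe_Ico, Set.ncard_coe_finset, Nat.card_Ico]
      omega

def cornerDiag (lam : YPartition) (i : ℕ) : ℤ := (lam.parts i : ℤ) - i

lemma diagIdx_addCorner (lam : YPartition) (i : ℕ) :
    diagIdx (addCorner lam i) = lam.cornerDiag i := rfl

lemma cornerDiag_antitone (lam : YPartition) : Antitone lam.cornerDiag := fun i' i h => by
  have := lam.antitone' i' i h
  unfold cornerDiag
  omega

end YPartition

namespace HasAddable

variable {lam : YPartition} {i i' : ℕ}

lemma parts_lt (h : HasAddable lam i) (hlt : i' < i) : lam.parts i < lam.parts i' := by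
  rcases h with h | h
  · omega
  · exact lt_of_lt_of_le h (lam.antitone' i' (i - 1) (by omega))

lemma cornerDiag_add_two_le (h : HasAddable lam i) (hlt : i' < i) :
    lam.cornerDiag i + 2 ≤ lam.cornerDiag i' := by
  have := h.parts_lt hlt
  unfold YPartition.cornerDiag
  omega

lemma cellDist_addCorner (h : HasAddable lam i) (hlt : i' < i) :
    (cellDist (addCorner lam i) (addCorner lam i') : ℤ) =
      lam.cornerDiag i' - lam.cornerDiag i := by
  have := h.cornerDiag_add_two_le hlt
  rw [cellDist, diagIdx_addCorner, diagIdx_addCorner]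
  omega

end HasAddable

namespace IsKShape

variable {k : ℕ} {lam : YPartition} {s : ℕ}

/-- The witness is the top row `i` of the block of rows of length `lam.parts (s - 1)`. If it were
too far from `s`, either that block has more than `k` rows and `rsk` would increase from row `i`
to row `s - 1`, or it is short and `csk` would increase between the columns of the two corners. -/
lemma exists_addable_cornerDiag_le (hsh : IsKShape k lam) (hk : 1 ≤ k)
    (hs : HasAddable lam s) (hs1 : 1 ≤ s) :
    ∃ i < s, HasAddable lam i ∧ lam.cornerDiag i ≤ lam.cornerDiag s + (k + 1) := by
  set a := lam.parts (s - 1)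
  set b := lam.parts s
  have hba : b < a := hs.parts_lt (by omega)
  set i := lam.conj a
  have his : i ≤ s - 1 := not_lt.mp fun h => (lt_irrefl a) (lt_conj_iff.mp h)
  have hblock : ∀ i' ∈ Set.Ico i s, lam.parts i' = a := by
    rintro i' ⟨hii', hi's⟩
    have h₁ : lam.parts i' ≤ lam.parts i := lam.antitone' i i' hii'
    have h₂ : lam.parts i ≤ a := not_lt.mp fun h => lt_irrefl i (lt_conj_iff.mpr h)
    have h₃ : a ≤ lam.parts i' := lam.antitone' i' (s - 1) (by omega)
    omega
  have hpi : lam.parts i = a := hblock i ⟨le_rfl, by omega⟩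
  have hconj_b : lam.conj b = s := conj_eq_of_parts_le_of_lt (by omega) le_rfl hba
  have hconj_a : lam.conj (a - 1) = s :=
    conj_eq_of_parts_le_of_lt (by omega) (by omega) (by omega)
  have hiadd : HasAddable lam i := by
    rcases Nat.eq_zero_or_pos i with h0 | h0
    · exact Or.inl h0
    · exact Or.inr (hpi ▸ lt_conj_iff.mp (by omega : i - 1 < lam.conj a))
  refine ⟨i, by omega, hiadd, ?_⟩
  by_contra hfar
  have hgap : k + 2 ≤ (a - b) + (s - i) := by
    simp only [cornerDiag, hpi] at hfar
    omega
  by_cases hlong : k + 1 ≤ s - i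
  · have h0 : rsk k lam i = 0 :=
      rsk_eq_zero_of_parts_add_eq (by rw [hpi, hblock (i + k) ⟨by omega, by omega⟩])
    have h1 : 0 < rsk k lam (s - 1) :=
      rsk_pos hk (by omega) (by rw [hconj_a]; omega)
    have := hsh.1 i (s - 1) his
    omega
  · have h1 : s - i ≤ csk k lam (a - 1) :=
      le_csk hconj_a (fun i' hi' => by rw [hblock i' hi']; omega) (by omega)
    have h2 : csk k lam b ≤ k + 1 - (a - b) :=
      csk_le hconj_b fun i' hi' => by
        have := lam.antitone' i' (s - 1) (by omega)
        omega
    have := hsh.2 b (a - 1) (by omega)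
    omega

lemma exists_kConnectedBelow (hsh : IsKShape k lam) (hk : 1 ≤ k)
    (hs : HasAddable lam s) (hs1 : 1 ≤ s) : ∃ s', KConnectedBelow k lam s s' := by
  obtain ⟨i, hi, hiadd, hidiag⟩ := exists_addable_cornerDiag_le hsh hk hs hs1
  have hex : ∃ m, m < s ∧ HasAddable lam m ∧
      cellDist (addCorner lam s) (addCorner lam m) ≤ k + 1 := by
    refine ⟨i, hi, hiadd, ?_⟩
    have := hs.cellDist_addCorner hi
    omega
  obtain ⟨hm₁, hm₂, hm₃⟩ := Nat.find_spec hex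
  exact ⟨Nat.find hex, hm₁, hs, hm₂, hm₃, fun r hr hadd hdist =>
    Nat.find_min hex hr ⟨by omega, hadd, hdist⟩⟩

end IsKShape

section Chains

variable {k : ℕ} {lam : YPartition}

namespace KConnectedBelow

variable {s s' : ℕ}

lemma unique {s'' : ℕ} (h : KConnectedBelow k lam s s') (h' : KConnectedBelow k lam s s'') :
    s' = s'' := by
  by_contra hne
  rcases Nat.lt_or_gt_of_ne hne with hlt | hlt
  · exact h'.2.2.2.2 s' hlt h.2.2.1 h.2.2.2.1
  · exact h.2.2.2.2 s'' hlt h'.2.2.1 h'.2.2.2.1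

lemma cornerDiag_le (h : KConnectedBelow k lam s s') :
    lam.cornerDiag s' ≤ lam.cornerDiag s + (k + 1) := by
  have := h.2.1.cellDist_addCorner h.1
  have := h.2.2.2.1
  omega

lemma le_of_cornerDiag_le (h : KConnectedBelow k lam s s') {r : ℕ} (hrs : r < s)
    (hr : HasAddable lam r) (hd : lam.cornerDiag r ≤ lam.cornerDiag s + (k + 1)) : s' ≤ r := by
  refine not_lt.mp fun hlt => h.2.2.2.2 r hlt hr ?_
  have := h.2.1.cellDist_addCorner hrs
  omega

end KConnectedBelow

namespace InChain

variable {u t s s' : ℕ}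

lemma le (h : InChain k lam t s) : s ≤ t := by
  induction h with
  | refl => exact le_rfl
  | step _ hkcb ih => exact hkcb.1.le.trans ih

lemma trans (h₁ : InChain k lam u t) (h₂ : InChain k lam t s) : InChain k lam u s := by
  induction h₂ with
  | refl => exact h₁
  | step _ hkcb ih => exact ih.step hkcb

lemma eq_or_exists (h : InChain k lam t s) :
    s = t ∨ ∃ z, KConnectedBelow k lam t z ∧ InChain k lam z s := by
  induction h with
  | refl => exact Or.inl rfl
  | @step p q _ hkcb ih =>
    rcases ih with rfl | ⟨z, hz, hchain⟩
    · exact Or.inr ⟨q, hkcb, refl⟩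
    · exact Or.inr ⟨z, hz, hchain.step hkcb⟩

lemma total (h : InChain k lam t s) (h' : InChain k lam t s') :
    InChain k lam s s' ∨ InChain k lam s' s := by
  induction h' with
  | refl => exact Or.inr h
  | @step p q _ hkcb ih =>
    rcases ih with hc | hc
    · exact Or.inl (hc.step hkcb)
    · rcases hc.eq_or_exists with rfl | ⟨z, hz, hchain⟩
      · exact Or.inl (refl.step hkcb)
      · exact Or.inr (hz.unique hkcb ▸ hchain)

lemma of_le (h : InChain k lam t s) (h' : InChain k lam t s') (hle : s' ≤ s) :
    InChain k lam s s' := by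
  rcases h.total h' with hc | hc
  · exact hc
  · obtain rfl : s = s' := le_antisymm hc.le hle
    exact refl

end InChain

lemma finite_setOf_inChain (t : ℕ) : {x | InChain k lam t x}.Finite :=
  (Set.finite_Iic t).subset fun _ => InChain.le

lemma setOf_inChain_inter_Iic {u t : ℕ} (h : InChain k lam u t) :
    {x | InChain k lam u x} ∩ Set.Iic t = {x | InChain k lam t x} := by
  ext x
  exact ⟨fun ⟨hx, hxt⟩ => h.of_le hx hxt, fun hx => ⟨h.trans hx, hx.le⟩⟩

lemma InChain.ncard_inter_Ici {u t r : ℕ} (h : InChain k lam u t) (hrt : r ≤ t) :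
    ({x | InChain k lam u x} ∩ Set.Ici r).ncard =
      ({x | InChain k lam t x} ∩ Set.Ici r).ncard +
        ({x | InChain k lam u x} ∩ Set.Ioi t).ncard := by
  calc ({x | InChain k lam u x} ∩ Set.Ici r).ncard
      = ({x | InChain k lam u x} ∩ (Set.Icc r t ∪ Set.Ioi t)).ncard := by
        rw [Set.Icc_union_Ioi_eq_Ici hrt]
    _ = _ := by
        rw [Set.ncard_inter_union_of_disjoint (finite_setOf_inChain u)
          (Set.disjoint_left.mpr fun x (hx : x ∈ Set.Icc r t) (hx' : x ∈ Set.Ioi t) =>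
            not_lt.mpr hx.2 hx'), ← setOf_inChain_inter_Iic h,
          Set.inter_assoc, Set.inter_comm (Set.Iic t), Set.Ici_inter_Iic]

lemma KConnectedBelow.setOf_inChain_inter_Iio {s s' : ℕ} (h : KConnectedBelow k lam s s') :
    {x | InChain k lam s x} ∩ Set.Iio s = {x | InChain k lam s' x} := by
  ext x
  refine ⟨fun ⟨hx, (hxs : x < s)⟩ => ?_, fun hx => ⟨(InChain.refl.step h).trans hx, ?_⟩⟩
  · rcases hx.eq_or_exists with rfl | ⟨z, hz, hzx⟩
    · exact absurd hxs (lt_irrefl x)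
    · exact hz.unique h ▸ hzx
  · exact lt_of_le_of_lt (InChain.le hx) h.1

lemma KConnectedBelow.ncard_inChain_inter_Ioo {s s' : ℕ} (h : KConnectedBelow k lam s s')
    (a : ℕ) : ({x | InChain k lam s x} ∩ Set.Ioo a s).ncard =
      ({x | InChain k lam s' x} ∩ Set.Ioo a s').ncard + if a < s' then 1 else 0 := by
  have hIoo : {x | InChain k lam s x} ∩ Set.Ioo a s =
      {x | InChain k lam s' x} ∩ Set.Ioi a := by
    rw [← h.setOf_inChain_inter_Iio, Set.inter_assoc, ← Set.Ioi_inter_Iio,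
      Set.inter_comm (Set.Ioi a)]
  rw [hIoo]
  split_ifs with has
  · have hins : {x | InChain k lam s' x} ∩ Set.Ioi a =
        insert s' ({x | InChain k lam s' x} ∩ Set.Ioo a s') := by
      ext x
      simp only [Set.mem_inter_iff, Set.mem_ofPred_eq, Set.mem_Ioi, Set.mem_Ioo,
        Set.mem_insert_iff]
      constructor
      · rintro ⟨hx, hax⟩
        exact (hx.le.eq_or_lt).imp id fun hlt => ⟨hx, hax, hlt⟩
      · rintro (rfl | ⟨hx, hax, -⟩)
        exacts [⟨InChain.refl, has⟩, ⟨hx, hax⟩]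
    rw [hins, Set.ncard_insert_of_notMem (fun hmem => lt_irrefl s' hmem.2.2)
      ((finite_setOf_inChain s').subset Set.inter_subset_left)]
  · congr 1
    ext x
    simp only [Set.mem_inter_iff, Set.mem_ofPred_eq, Set.mem_Ioi, Set.mem_Ioo]
    constructor
    · rintro ⟨hx, hax⟩
      exact absurd (hax.trans_le hx.le) has
    · rintro ⟨hx, hax, -⟩
      exact ⟨hx, hax⟩

lemma iCC_true_true (top bot : ℕ) :
    iCC k lam top bot true true = ({x | InChain k lam top x} ∩ Set.Ici bot).ncard := by
  rw [iCC, Nat.card_coe_set_eq]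
  congr 1
  ext s
  simp [and_comm]

lemma iCC_false_false (top bot : ℕ) :
    iCC k lam top bot false false = ({x | InChain k lam top x} ∩ Set.Ioo bot top).ncard := by
  rw [iCC, Nat.card_coe_set_eq]
  congr 1
  ext s
  simp only [Set.mem_ofPred_eq, Set.mem_inter_iff, Set.mem_Ioo, Bool.false_eq_true,
    if_false, false_or]
  exact ⟨fun ⟨hs, hbs, hne⟩ => ⟨hs, hbs, lt_of_le_of_ne hs.le hne⟩,
    fun ⟨hs, hbs, hst⟩ => ⟨hs, hbs, hst.ne⟩⟩

lemma cochargeStepVal_of_lt {r r' : ℕ} (h : r' < r) :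
    cochargeStepVal k lam r r' = -(({x | InChain k lam r x} ∩ Set.Ioo r' r).ncard : ℤ) := by
  rw [cochargeStepVal, if_pos h, iCC_false_false]

lemma cochargeStepVal_of_le {r r' : ℕ} (h : r ≤ r') :
    cochargeStepVal k lam r r' = ({x | InChain k lam r' x} ∩ Set.Ici r).ncard := by
  rw [cochargeStepVal, if_neg (not_lt.mpr h), iCC_true_true]

end Chains

def grownRows (lam mu : YPartition) : Set ℕ := {i | lam.parts i < mu.parts i}

namespace IsStringOf

variable {k ℓ : ℕ} {lam mu : YPartition} {a : ℕ → ℕ × ℕ} {t t' : ℕ}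

lemma fst_lt (h : IsStringOf k lam mu ℓ a) (htt' : t < t') (ht' : t' < ℓ) :
    (a t').1 < (a t).1 := by
  induction t', htt' using Nat.le_induction with
  | base => exact (h.2.2.2 t ht').1
  | succ m hm ih => exact ((h.2.2.2 m ht').1).trans (ih (by omega))

lemma fst_le (h : IsStringOf k lam mu ℓ a) (htt' : t ≤ t') (ht' : t' < ℓ) :
    (a t').1 ≤ (a t).1 := by
  rcases htt'.lt_or_eq with htt' | rfl
  · exact (h.fst_lt htt' ht').le
  · exact le_rfl

lemma parts_le_succ (h : IsStringOf k lam mu ℓ a) (x : ℕ) :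
    mu.parts x ≤ lam.parts x + 1 := by
  by_contra hx
  have hmem : ∀ j, lam.parts x ≤ j → j < mu.parts x → ∃ t < ℓ, a t = (x, j) :=
    fun j h₁ h₂ => (h.2.1 (x, j)).mp ⟨h₂, not_lt.mpr h₁⟩
  obtain ⟨t₁, ht₁, ha₁⟩ := hmem (lam.parts x) le_rfl (by omega)
  obtain ⟨t₂, ht₂, ha₂⟩ := hmem (lam.parts x + 1) (by omega) (by omega)
  have hne : t₁ ≠ t₂ := by rintro rfl; simp [ha₁] at ha₂
  rcases Nat.lt_or_gt_of_ne hne with hlt | hlt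
  · have := h.fst_lt hlt ht₂; simp [ha₁, ha₂] at this
  · have := h.fst_lt hlt ht₁; simp [ha₁, ha₂] at this

lemma eq_addCorner (h : IsStringOf k lam mu ℓ a) (ht : t < ℓ) :
    a t = addCorner lam (a t).1 := by
  obtain ⟨(hmu : (a t).2 < mu.parts (a t).1), (hlam : ¬ (a t).2 < lam.parts (a t).1)⟩ :=
    (h.2.1 (a t)).mpr ⟨t, ht, rfl⟩
  have := h.parts_le_succ (a t).1
  exact Prod.ext rfl (by show (a t).2 = lam.parts (a t).1; omega)

lemma lt_iff (h : IsStringOf k lam mu ℓ a) (x : ℕ) :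
    lam.parts x < mu.parts x ↔ ∃ t < ℓ, (a t).1 = x := by
  constructor
  · intro hx
    obtain ⟨t, ht, hat⟩ := (h.2.1 (x, lam.parts x)).mp ⟨hx, lt_irrefl _⟩
    exact ⟨t, ht, by rw [hat]⟩
  · rintro ⟨t, ht, rfl⟩
    have hmem := (h.2.1 (a t)).mpr ⟨t, ht, rfl⟩
    rw [h.eq_addCorner ht] at hmem
    exact hmem.1

lemma cornerDiag_gap (h : IsStringOf k lam mu ℓ a) (ht : t + 1 < ℓ) :
    lam.cornerDiag (a t).1 + k ≤ lam.cornerDiag (a (t + 1)).1 ∧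
      lam.cornerDiag (a (t + 1)).1 ≤ lam.cornerDiag (a t).1 + (k + 1) := by
  obtain ⟨hrow, hcont⟩ := h.2.2.2 t ht
  have hpar := lam.antitone' _ _ hrow.le
  have hdist : (cellDist (a t) (a (t + 1)) : ℤ) =
      lam.cornerDiag (a (t + 1)).1 - lam.cornerDiag (a t).1 := by
    rw [cellDist, congrArg diagIdx (h.eq_addCorner (by omega)),
      congrArg diagIdx (h.eq_addCorner ht), diagIdx_addCorner, diagIdx_addCorner]
    simp only [cornerDiag]
    omega
  rcases hcont with hc | hc <;> rw [hc] at hdist <;> push_cast at hdist <;> omega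

/-- Otherwise row `x - 1` grows too, and the new cells in rows `x` and `x - 1` would lie on
adjacent diagonals, whereas consecutive cells of a string are `k ≥ 2` diagonals apart. -/
lemma hasAddable (hk : 2 ≤ k) (h : IsStringOf k lam mu ℓ a) (ht : t < ℓ) :
    HasAddable lam (a t).1 := by
  have hx_lt : lam.parts (a t).1 < mu.parts (a t).1 := (h.lt_iff _).mpr ⟨t, ht, rfl⟩
  have hgap := (h.cornerDiag_gap (t := t))
  generalize hxdef : (a t).1 = x at hx_lt hgap ⊢
  refine (Nat.eq_zero_or_pos x).imp id fun hx => lt_of_not_ge fun hle => ?_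
  have heq : lam.parts (x - 1) = lam.parts x := le_antisymm hle (lam.antitone' _ _ (by omega))
  have hprev : lam.parts (x - 1) < mu.parts (x - 1) := by
    have := mu.antitone' (x - 1) x (by omega)
    omega
  obtain ⟨t', ht', hat'⟩ := (h.lt_iff _).mp hprev
  have htt' : t + 1 ≤ t' := by
    by_contra hc
    have := h.fst_le (show t' ≤ t by omega) ht
    omega
  have hnext : (a (t + 1)).1 = x - 1 := by
    have h₁ := h.fst_le htt' ht'
    have h₂ := h.fst_lt (by omega : t < t + 1) (by omega)
    omega
  have := (hgap (by omega)).1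
  simp only [cornerDiag, hnext, heq] at this
  omega

end IsStringOf

/-- `row 0 > row 1 > ⋯ > row (len - 1)` are the rows `r₁ > ⋯ > r_{ℓ+1}` of a cover, so that
`len = ℓ + 1`. -/
structure CoverRows (k : ℕ) (lam mu : YPartition) where
  len : ℕ
  row : ℕ → ℕ
  len_pos : 0 < len
  row_lt : ∀ ⦃t t'⦄, t < t' → t' < len → row t' < row t
  mem_grownRows_iff : ∀ x, x ∈ grownRows lam mu ↔ ∃ t < len, row t = x
  le : ∀ x, lam.parts x ≤ mu.parts x
  le_succ : ∀ x, mu.parts x ≤ lam.parts x + 1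
  hasAddable : ∀ t < len, HasAddable lam (row t)
  cornerDiag_gap : ∀ t, t + 1 < len →
    lam.cornerDiag (row t) + k ≤ lam.cornerDiag (row (t + 1)) ∧
      lam.cornerDiag (row (t + 1)) ≤ lam.cornerDiag (row t) + (k + 1)

lemma IsCover.nonempty_coverRows {k : ℕ} {lam mu : YPartition} (hk : 2 ≤ k)
    (h : IsCover k lam mu) : Nonempty (CoverRows k lam mu) := by
  obtain ⟨-, -, ℓ, a, hℓ, hstr, -, -⟩ := h
  exact ⟨⟨ℓ, fun t => (a t).1, hℓ, fun _ _ => hstr.fst_lt, hstr.lt_iff, hstr.1,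
    hstr.parts_le_succ, fun _ => hstr.hasAddable hk, fun _ => hstr.cornerDiag_gap⟩⟩

namespace CoverRows

variable {k : ℕ} {lam mu : YPartition} {t x s s' : ℕ}

def bot (D : CoverRows k lam mu) : ℕ := D.row (D.len - 1)

def top (D : CoverRows k lam mu) : ℕ := D.row 0

lemma row_le (D : CoverRows k lam mu) {t'} (htt' : t ≤ t') (ht' : t' < D.len) :
    D.row t' ≤ D.row t := by
  rcases htt'.lt_or_eq with htt' | rfl
  · exact (D.row_lt htt' ht').le
  · exact le_rfl

lemma row_mem (D : CoverRows k lam mu) (ht : t < D.len) : D.row t ∈ grownRows lam mu :=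
  (D.mem_grownRows_iff _).mpr ⟨t, ht, rfl⟩

lemma bot_le_row (D : CoverRows k lam mu) (ht : t < D.len) : D.bot ≤ D.row t :=
  D.row_le (by omega) (by omega)

lemma row_le_top (D : CoverRows k lam mu) (ht : t < D.len) : D.row t ≤ D.top :=
  D.row_le (Nat.zero_le t) ht

lemma bot_le (D : CoverRows k lam mu) (hx : x ∈ grownRows lam mu) : D.bot ≤ x := by
  obtain ⟨t, ht, rfl⟩ := (D.mem_grownRows_iff x).mp hx
  exact D.bot_le_row ht

lemma le_top (D : CoverRows k lam mu) (hx : x ∈ grownRows lam mu) : x ≤ D.top := by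
  obtain ⟨t, ht, rfl⟩ := (D.mem_grownRows_iff x).mp hx
  exact D.row_le_top ht

lemma bot_mem (D : CoverRows k lam mu) : D.bot ∈ grownRows lam mu :=
  D.row_mem (by have := D.len_pos; omega)

lemma bot_le_top (D : CoverRows k lam mu) : D.bot ≤ D.top := D.le_top D.bot_mem

lemma succ_lt_len_of_bot_lt (D : CoverRows k lam mu) (ht : t < D.len) (hbt : D.bot < D.row t) :
    t + 1 < D.len := by
  by_contra hc
  rw [bot, show D.len - 1 = t by omega] at hbt
  exact lt_irrefl _ hbt

lemma top_mem (D : CoverRows k lam mu) : D.top ∈ grownRows lam mu := D.row_mem D.len_pos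

lemma rowDown_eq (D : CoverRows k lam mu) : rowDown lam mu = D.bot :=
  le_antisymm (Nat.sInf_le D.bot_mem) (D.bot_le (Nat.sInf_mem ⟨_, D.bot_mem⟩))

lemma rowUp_eq (D : CoverRows k lam mu) : rowUp lam mu = D.top :=
  le_antisymm (csSup_le ⟨_, D.bot_mem⟩ fun _ => D.le_top)
    (le_csSup ⟨D.top, fun _ => D.le_top⟩ D.top_mem)

lemma grownRows_eq_image (D : CoverRows k lam mu) : grownRows lam mu = D.row '' Set.Iio D.len := by
  ext x
  rw [D.mem_grownRows_iff]
  rfl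

lemma finite_grownRows (D : CoverRows k lam mu) : (grownRows lam mu).Finite := by
  rw [D.grownRows_eq_image]
  exact (Set.finite_Iio _).image _

lemma ncard_grownRows (D : CoverRows k lam mu) : (grownRows lam mu).ncard = D.len := by
  rw [D.grownRows_eq_image, Set.InjOn.ncard_image, ← Finset.coe_range, Set.ncard_coe_finset,
    Finset.card_range]
  intro t ht t' ht' he
  by_contra hne
  rcases Nat.lt_or_gt_of_ne hne with h | h
  · exact (D.row_lt h ht').ne' he
  · exact (D.row_lt h ht).ne he

lemma ncard_grownRows_inter_Ioi_bot (D : CoverRows k lam mu) :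
    (grownRows lam mu ∩ Set.Ioi D.bot).ncard = D.len - 1 := by
  have : grownRows lam mu ∩ Set.Ioi D.bot = grownRows lam mu \ {D.bot} := by
    ext x
    exact ⟨fun ⟨hx, hlt⟩ => ⟨hx, (Set.mem_Ioi.mp hlt).ne'⟩,
      fun ⟨hx, hne⟩ => ⟨hx, lt_of_le_of_ne (D.bot_le hx) (Ne.symm hne)⟩⟩
  rw [this, Set.ncard_sdiff_singleton_of_mem D.bot_mem, D.ncard_grownRows]

lemma setOf_mem_eq_union (D : CoverRows k lam mu) :
    {b : ℕ × ℕ | mu.Mem b} =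
      {b | lam.Mem b} ∪ (fun x => (x, lam.parts x)) '' grownRows lam mu := by
  ext ⟨i, j⟩
  have h₁ := D.le i
  have h₂ := D.le_succ i
  simp only [YPartition.Mem, Set.mem_ofPred_eq, Set.mem_union, Set.mem_image, grownRows,
    Prod.mk.injEq]
  constructor
  · intro hj
    by_cases hl : j < lam.parts i
    · exact Or.inl hl
    · exact Or.inr ⟨i, by omega, rfl, by omega⟩
  · rintro (hl | ⟨x, hx, rfl, rfl⟩) <;> omega

lemma psize_eq (D : CoverRows k lam mu) : psize mu = psize lam + D.len := by
  have hdisj :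
      Disjoint {b : ℕ × ℕ | lam.Mem b} ((fun x => (x, lam.parts x)) '' grownRows lam mu) :=
    Set.disjoint_left.mpr fun b (hb : b.2 < lam.parts b.1) ⟨x, _, hx⟩ => by
      subst hx
      exact lt_irrefl _ hb
  rw [psize, psize, Nat.card_coe_set_eq, Nat.card_coe_set_eq, D.setOf_mem_eq_union,
    Set.ncard_union_eq hdisj lam.finite_setOf_mem (D.finite_grownRows.image _),
    Set.ncard_image_of_injective _ fun x y he => congrArg Prod.fst he, D.ncard_grownRows]

lemma kConnectedBelow_row (D : CoverRows k lam mu) (ht : t + 1 < D.len) :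
    KConnectedBelow k lam (D.row t) (D.row (t + 1)) := by
  have hrow := D.row_lt ((by omega : t < t + 1)) ht
  have hadd := D.hasAddable t (by omega)
  have hdist := hadd.cellDist_addCorner hrow
  obtain ⟨hgap₁, hgap₂⟩ := D.cornerDiag_gap t ht
  refine ⟨hrow, hadd, D.hasAddable (t + 1) ht, by omega, fun r hr hradd hrd => ?_⟩
  have := (D.hasAddable (t + 1) ht).cornerDiag_add_two_le hr
  have := hadd.cellDist_addCorner (hr.trans hrow)
  omega

lemma inChain_top_row (D : CoverRows k lam mu) (ht : t < D.len) :
    InChain k lam D.top (D.row t) := by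
  induction t with
  | zero => exact InChain.refl
  | succ m ih => exact (ih (by omega)).step (D.kConnectedBelow_row ht)

lemma inChain_top_bot (D : CoverRows k lam mu) : InChain k lam D.top D.bot :=
  D.inChain_top_row (by have := D.len_pos; omega)

lemma setOf_inChain_top_inter_Ioi_bot (D : CoverRows k lam mu) :
    {x | InChain k lam D.top x} ∩ Set.Ioi D.bot = grownRows lam mu ∩ Set.Ioi D.bot := by
  have hsub : ∀ x, InChain k lam D.top x → D.bot < x → x ∈ grownRows lam mu := by
    intro x hx hbx
    induction hx with
    | refl => exact D.top_mem
    | @step p q _ hpq ih =>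
      obtain ⟨t, ht, rfl⟩ := (D.mem_grownRows_iff p).mp (ih (hbx.trans hpq.1))
      have ht₁ := D.succ_lt_len_of_bot_lt ht (hbx.trans hpq.1)
      exact hpq.unique (D.kConnectedBelow_row ht₁) ▸ D.row_mem ht₁
  ext x
  refine ⟨fun ⟨hx, hbx⟩ => ⟨hsub x hx hbx, hbx⟩, fun ⟨hx, hbx⟩ => ⟨?_, hbx⟩⟩
  · obtain ⟨t, ht, rfl⟩ := (D.mem_grownRows_iff x).mp hx
    exact D.inChain_top_row ht

lemma setOf_inChain_top_inter_Ici (D : CoverRows k lam mu) {r : ℕ} (hbr : D.bot < r) :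
    {x | InChain k lam D.top x} ∩ Set.Ici r = grownRows lam mu ∩ Set.Ici r := by
  rw [← Set.inter_eq_right.mpr (Set.Ici_subset_Ioi.mpr hbr), ← Set.inter_assoc,
    D.setOf_inChain_top_inter_Ioi_bot, Set.inter_assoc]

lemma grownRows_inter_Ioo_bot (D : CoverRows k lam mu) {r : ℕ} (htr : D.top < r) :
    grownRows lam mu ∩ Set.Ioo D.bot r = grownRows lam mu ∩ Set.Ioi D.bot := by
  ext x
  simp only [Set.mem_inter_iff, Set.mem_Ioo, Set.mem_Ioi, and_congr_right_iff]
  intro hx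
  have := D.le_top hx
  omega

lemma hasAddable_bot_add_one (D : CoverRows k lam mu) (hk : 2 ≤ k) :
    HasAddable mu (D.bot + 1) := by
  refine Or.inr ?_
  simp only [Nat.add_sub_cancel]
  have hbot : lam.parts D.bot < mu.parts D.bot := D.bot_mem
  have := D.le_succ D.bot
  by_cases hgrown : D.bot + 1 ∈ grownRows lam mu
  · obtain ⟨t, ht, hrow⟩ := (D.mem_grownRows_iff _).mp hgrown
    have ht₁ := D.succ_lt_len_of_bot_lt ht (by omega)
    have hnext : D.row (t + 1) = D.bot := by
      have := D.row_lt ((by omega : t < t + 1)) ht₁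
      have := D.bot_le_row ht₁
      omega
    have hgap := (D.cornerDiag_gap t ht₁).1
    rw [hrow, hnext] at hgap
    have := D.le_succ (D.bot + 1)
    simp only [YPartition.cornerDiag] at hgap
    push_cast at hgap
    omega
  · have : mu.parts (D.bot + 1) ≤ lam.parts (D.bot + 1) := not_lt.mp hgrown
    have := lam.antitone' D.bot (D.bot + 1) (by omega)
    omega

/-- Once `row t` is below `s`, the next grown row lies more than `k + 1` diagonals beyond `s`,
out of reach of the successor `s'`. -/
lemma row_succ_lt (D : CoverRows k lam mu) (h : KConnectedBelow k lam s s')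
    (ht : t + 1 < D.len) (hts : D.row t < s) : D.row (t + 1) < s' := by
  by_contra hc
  have := h.2.1.cornerDiag_add_two_le hts
  have := (D.cornerDiag_gap t ht).1
  have := h.cornerDiag_le
  have := lam.cornerDiag_antitone (not_lt.mp hc)
  omega

lemma subsingleton_grownRows_inter_Ico (D : CoverRows k lam mu) (h : KConnectedBelow k lam s s') :
    (grownRows lam mu ∩ Set.Ico s' s).Subsingleton := by
  have key : ∀ t u, t < u → u < D.len → D.row t < s → D.row u < s' := fun t u htu hu hts =>
    (D.row_le (by omega) hu).trans_lt (D.row_succ_lt h (by omega) hts)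
  rintro x ⟨hx, hs'x, hxs⟩ y ⟨hy, hs'y, hys⟩
  obtain ⟨t, ht, rfl⟩ := (D.mem_grownRows_iff x).mp hx
  obtain ⟨u, hu, rfl⟩ := (D.mem_grownRows_iff y).mp hy
  rcases lt_trichotomy t u with htu | rfl | hut
  · exact absurd (key t u htu hu hxs) (not_lt.mpr hs'y)
  · rfl
  · exact absurd (key u t hut ht hys) (not_lt.mpr hs'x)

lemma exists_row_between (D : CoverRows k lam mu) (h : KConnectedBelow k lam s s')
    (hbs' : D.bot < s') (hs't : s' ≤ D.top) :
    ∃ t < D.len, D.bot < D.row t ∧ D.row t < s ∧ s' ≤ D.row t := by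
  have hlen : 2 ≤ D.len := by
    by_contra hc
    have : D.bot = D.top := by rw [bot, top, show D.len - 1 = 0 by omega]
    omega
  have hex : ∃ t, t + 1 < D.len ∧ D.row (t + 1) < s' :=
    ⟨D.len - 2, by omega, by rw [show D.len - 2 + 1 = D.len - 1 by omega]; exact hbs'⟩
  obtain ⟨t₀, ⟨ht₀, hnext⟩, hmin⟩ :
      ∃ t₀, (t₀ + 1 < D.len ∧ D.row (t₀ + 1) < s') ∧
        ∀ t < t₀, ¬ (t + 1 < D.len ∧ D.row (t + 1) < s') :=
    ⟨Nat.find hex, Nat.find_spec hex, fun t ht => Nat.find_min hex ht⟩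
  have hs't₀ : s' ≤ D.row t₀ := by
    by_contra hc
    rcases Nat.eq_zero_or_pos t₀ with h0 | hpos
    · exact hc (h0 ▸ hs't)
    · exact hmin (t₀ - 1) (by omega)
        ⟨by omega, by rw [show t₀ - 1 + 1 = t₀ by omega]; exact not_le.mp hc⟩
  have ht₀s : D.row t₀ < s := by
    have := h.1
    by_contra hc
    have := lam.cornerDiag_antitone (not_lt.mp hc)
    have := (D.cornerDiag_gap t₀ ht₀).2
    have := h.le_of_cornerDiag_le (by omega) (D.hasAddable _ ht₀) (by omega)
    omega
  exact ⟨t₀, by omega, by omega, ht₀s, hs't₀⟩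

lemma ncard_grownRows_window (D : CoverRows k lam mu) (h : KConnectedBelow k lam s s') :
    (grownRows lam mu ∩ Set.Ioo D.bot s ∩ Set.Ici s').ncard =
      if D.bot < s' ∧ s' ≤ D.top then 1 else 0 := by
  split_ifs with hs'
  · obtain ⟨t, ht, hbt, hts, hs't⟩ := D.exists_row_between h hs'.1 hs'.2
    have hmem : D.row t ∈ grownRows lam mu ∩ Set.Ioo D.bot s ∩ Set.Ici s' :=
      ⟨⟨D.row_mem ht, hbt, hts⟩, hs't⟩
    have hsub :
        grownRows lam mu ∩ Set.Ioo D.bot s ∩ Set.Ici s' ⊆ grownRows lam mu ∩ Set.Ico s' s :=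
      fun x ⟨⟨hx, _, hxs⟩, hs'x⟩ => ⟨hx, hs'x, hxs⟩
    rw [Set.eq_singleton_iff_unique_mem.mpr ⟨hmem, fun x hx =>
      D.subsingleton_grownRows_inter_Ico h (hsub hx) (hsub hmem)⟩, Set.ncard_singleton]
  · rw [Set.ncard_eq_zero (D.finite_grownRows.subset
      (Set.inter_subset_left.trans Set.inter_subset_left)), Set.eq_empty_iff_forall_notMem]
    rintro x ⟨⟨hx, hbx, hxs⟩, (hs'x : s' ≤ x)⟩
    obtain ⟨t, ht, rfl⟩ := (D.mem_grownRows_iff x).mp hx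
    have ht₁ := D.succ_lt_len_of_bot_lt ht hbx
    have := D.row_succ_lt h ht₁ hxs
    have := D.bot_le_row ht₁
    have := D.row_le_top ht
    exact hs' ⟨by omega, by omega⟩

/-- Induction along the chain: by `ncard_grownRows_window`, a step that lands in the band
`(D.bot, D.top]` passes exactly one grown row, and any other step passes none. -/
lemma ncard_inChain_inter_Ioo_bot (D : CoverRows k lam mu) (hsh : IsKShape k lam) (hk : 1 ≤ k)
    {s : ℕ} (hs : HasAddable lam s) (hbs : D.bot < s) :
    ({x | InChain k lam s x} ∩ Set.Ioo D.bot s).ncard =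
      ({x | InChain k lam s x} ∩ Set.Ioo D.top s).ncard +
        (grownRows lam mu ∩ Set.Ioo D.bot s).ncard := by
  induction s using Nat.strong_induction_on with
  | _ s ih =>
  obtain ⟨s', h⟩ := IsKShape.exists_kConnectedBelow hsh hk hs (by omega)
  have hbt := D.bot_le_top
  have ih' : ({x | InChain k lam s' x} ∩ Set.Ioo D.bot s').ncard =
      ({x | InChain k lam s' x} ∩ Set.Ioo D.top s').ncard +
        (grownRows lam mu ∩ Set.Ioo D.bot s').ncard := by
    by_cases hbs' : D.bot < s'
    · exact ih s' h.1 h.2.2.1 hbs'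
    · simp [Set.Ioo_eq_empty hbs', Set.Ioo_eq_empty (show ¬ D.top < s' by omega)]
  rw [h.ncard_inChain_inter_Ioo, h.ncard_inChain_inter_Ioo, ih',
    Set.ncard_inter_Ioo_eq_add D.finite_grownRows h.1.le, D.ncard_grownRows_window h]
  split_ifs <;> omega

lemma cochargeStepVal_top_sub_bot (D : CoverRows k lam mu) (hsh : IsKShape k lam) (hk : 1 ≤ k)
    {r : ℕ} (hr : HasAddable lam r) :
    cochargeStepVal k lam r D.top - cochargeStepVal k lam r D.bot = D.len - 1 := by
  have hlen : ((grownRows lam mu ∩ Set.Ioi D.bot).ncard : ℤ) = D.len - 1 := by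
    rw [D.ncard_grownRows_inter_Ioi_bot]
    have := D.len_pos
    omega
  have hbt := D.bot_le_top
  rcases le_or_gt r D.bot with hrb | hbr
  · rw [cochargeStepVal_of_le (hrb.trans hbt), cochargeStepVal_of_le hrb,
      D.inChain_top_bot.ncard_inter_Ici hrb, D.setOf_inChain_top_inter_Ioi_bot]
    push_cast
    omega
  rw [cochargeStepVal_of_lt hbr, D.ncard_inChain_inter_Ioo_bot hsh hk hr hbr]
  rcases le_or_gt r D.top with hrt | htr
  · rw [← Set.Ioo_union_Ici_eq_Ioi hbr, Set.ncard_inter_union_of_disjoint D.finite_grownRows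
      (Set.disjoint_left.mpr fun x (hx : x ∈ Set.Ioo D.bot r) (hx' : x ∈ Set.Ici r) =>
        not_le.mpr hx.2 hx')] at hlen
    rw [cochargeStepVal_of_le hrt, D.setOf_inChain_top_inter_Ici hbr,
      Set.Ioo_eq_empty (not_lt.mpr hrt)]
    simp only [Set.inter_empty, Set.ncard_empty]
    push_cast at hlen ⊢
    omega
  · rw [cochargeStepVal_of_lt htr, D.grownRows_inter_Ioo_bot htr]
    omega

end CoverRows

/-- moving (n+1)↓ to the position of (n+1)↑ raises the cocharge
of the letter n+1 by |c_{n+1}| - 1. -/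
theorem cocharge_shift_up (k N : ℕ) (hk : 2 ≤ k) (T : ℕ → YPartition)
    (hT : StdKShapeTableau k N T) (n : ℕ) (hn : 1 ≤ n) (hnN : n + 1 ≤ N) :
    cochargeStepVal k (T n) (rowDown (T (n - 1)) (T n) + 1) (rowUp (T n) (T (n + 1))) -
      cochargeStepVal k (T n) (rowDown (T (n - 1)) (T n) + 1)
        (rowDown (T n) (T (n + 1))) =
    (psize (T (n + 1)) : ℤ) - (psize (T n) : ℤ) - 1 := by
  have hcov : IsCover k (T n) (T (n + 1)) := hT.2 n (by omega)
  have hprev : IsCover k (T (n - 1)) (T n) := by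
    simpa [Nat.sub_add_cancel hn] using hT.2 (n - 1) (by omega)
  obtain ⟨D⟩ := hcov.nonempty_coverRows hk
  obtain ⟨D'⟩ := hprev.nonempty_coverRows hk
  rw [D'.rowDown_eq, D.rowUp_eq, D.rowDown_eq,
    D.cochargeStepVal_top_sub_bot hcov.1 (by omega) (D'.hasAddable_bot_add_one hk), D.psize_eq]
  push_cast
  ring
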